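/- arXiv:2501.19326 — 3 statements merged into one kernel-verified Lean document; each statement's English description precedes it below -/
import Mathlib

section
/- A letter a ∈ A is bounded for σ if and only if σ^{|A|}(a) is a word all of whose letters are periodic letters. -/
open List
open scoped Classical

namespace SubstPaper

variable {A : Type*}

/-- Apply a substitution letterwise to a word. -/
def applyW (σ : A → List A) (u : List A) : List A := u.flatMap σ

/-- `n`-th iterate of a substitution on a word. -/
def iterW (σ : A → List A) (n : ℕ) (u : List A) : List A := (applyW σ)^[n] u

/-- Non-erasing substitution. -/
def NonErasing (σ : A → List A) : Prop := ∀ a, σ a ≠ []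

/-- A letter is bounded if the lengths of its iterated images stay bounded. -/
def IsBounded (σ : A → List A) (a : A) : Prop := ∃ K, ∀ n, (iterW σ n [a]).length ≤ K

/-- A letter is growing if it is not bounded. -/
def IsGrowing (σ : A → List A) (a : A) : Prop := ¬ IsBounded σ a

/-- The prefix of `u` consisting of bounded letters, before the first growing letter. -/
noncomputable def LBw (σ : A → List A) (u : List A) : List A :=
  u.takeWhile (fun a => decide (IsBounded σ a))

/-- The first growing letter of `u` (junk value if none). -/
noncomputable def LCw [Inhabited A] (σ : A → List A) (u : List A) : A :=
  (u.dropWhile (fun a => decide (IsBounded σ a))).headI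

/-- The bounded suffix of `u`, after the last growing letter. -/
noncomputable def RBw (σ : A → List A) (u : List A) : List A :=
  (LBw σ u.reverse).reverse

/-- The last growing letter of `u` (junk value if none). -/
noncomputable def RCw [Inhabited A] (σ : A → List A) (u : List A) : A :=
  LCw σ u.reverse

/-- Growing letters occurring in a word. -/
def alphC (σ : A → List A) (u : List A) : Set A := {c | IsGrowing σ c ∧ c ∈ u}

/-- The map on alphabets induced by the substitution: `D ↦ ⋃_{a ∈ D} alph_C(σ(a))`. -/
def FAlph (σ : A → List A) (D : Set A) : Set A := ⋃ a ∈ D, alphC σ (σ a)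

/-- `D` is a `k`-periodic alphabet: nonempty set of growing letters, `k` least positive
with `F^[k] D = D`. -/
def IsKPeriodicAlph (σ : A → List A) (D : Set A) (k : ℕ) : Prop :=
  D.Nonempty ∧ (∀ a ∈ D, IsGrowing σ a) ∧ 0 < k ∧ (FAlph σ)^[k] D = D ∧
    ∀ j, 0 < j → (FAlph σ)^[j] D = D → k ≤ j

/-- `D` is a minimal alphabet: periodic with no proper nonempty periodic subalphabet. -/
def IsMinimalAlph (σ : A → List A) (D : Set A) : Prop :=
  (∃ k, IsKPeriodicAlph σ D k) ∧
    ∀ D' ⊆ D, D'.Nonempty → (∃ k', IsKPeriodicAlph σ D' k') → D' = D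

/-- The finite word `u` occurs in the bi-infinite word `x`. -/
def OccursIn (x : ℤ → A) (u : List A) : Prop :=
  ∃ i : ℤ, ∀ j : Fin u.length, x (i + j.1) = u.get j

/-- The substitution subshift `X_σ`. -/
def Xsub (σ : A → List A) : Set (ℤ → A) :=
  {x | ∀ u, OccursIn x u → ∃ a n, u <:+: iterW σ n [a]}

/-- The left shift on bi-infinite words. -/
def shiftT (x : ℤ → A) : ℤ → A := fun i => x (i + 1)

/-- A subshift: nonempty, closed, shift-invariant. -/
def IsSubshift [TopologicalSpace A] (X : Set (ℤ → A)) : Prop :=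
  X.Nonempty ∧ IsClosed X ∧ shiftT '' X = X

/-- A minimal subshift: contains no proper subshift. -/
def IsMinimalSubshift [TopologicalSpace A] (X : Set (ℤ → A)) : Prop :=
  IsSubshift X ∧ ∀ Y ⊆ X, IsSubshift Y → Y = X

/-- The periodic bi-infinite word `ωuω`. -/
noncomputable def perWord [Inhabited A] (u : List A) : ℤ → A :=
  fun i => u.getD ((i % (u.length : ℤ)).toNat) default

/-- The shift-orbit closure `X(x)` of a bi-infinite word. -/
def orbitClosure [TopologicalSpace A] (x : ℤ → A) : Set (ℤ → A) :=
  closure {y | ∃ k : ℤ, ∀ i, y i = x (i + k)}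

/-- `x` is the letterwise image of `y` under `σ`, with the origin at the image of
position `0`. -/
def IsSubstImage (σ : A → List A) (y x : ℤ → A) : Prop :=
  ∃ c : ℤ → ℤ, c 0 = 0 ∧ (∀ i, c (i + 1) = c i + (σ (y i)).length) ∧
    ∀ i : ℤ, ∀ j : Fin (σ (y i)).length, x (c i + j.1) = (σ (y i)).get j

/-- The induced map `σ̃` on subshifts: all shifts of images of elements of `X`. -/
def tildeS (σ : A → List A) (X : Set (ℤ → A)) : Set (ℤ → A) :=
  {z | ∃ x ∈ X, ∃ k : ℤ, IsSubstImage σ x (fun i => z (i + k))}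

/-- Growing letters occurring in some element of `X`. -/
def alphCX (σ : A → List A) (X : Set (ℤ → A)) : Set A :=
  {c | IsGrowing σ c ∧ ∃ x ∈ X, ∃ i : ℤ, x i = c}

/-- The subshift of the restriction `σᵏ|_E` (words whose factors occur in some
`σ^{kn}(a)`, `a ∈ E`). -/
def Xrestr (σ : A → List A) (E : Set A) (k : ℕ) : Set (ℤ → A) :=
  {x | ∀ u, OccursIn x u → ∃ a ∈ E, ∃ n, u <:+: iterW σ (k * n) [a]}

/-- A growing letter `c` is left-isolated: `σⁿ(c) = u c v` with `u` nonempty bounded. -/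
def LeftIsolated (σ : A → List A) (c : A) : Prop :=
  IsGrowing σ c ∧ ∃ n, 1 ≤ n ∧ ∃ u v : List A, u ≠ [] ∧ (∀ b ∈ u, IsBounded σ b) ∧
    iterW σ n [c] = u ++ c :: v

/-- A growing letter `c` is right-isolated: `σⁿ(c) = v c u` with `u` nonempty bounded. -/
def RightIsolated (σ : A → List A) (c : A) : Prop :=
  IsGrowing σ c ∧ ∃ n, 1 ≤ n ∧ ∃ u v : List A, u ≠ [] ∧ (∀ b ∈ u, IsBounded σ b) ∧
    iterW σ n [c] = v ++ c :: u

/-- Growing letter that is neither left- nor right-isolated (member of `C_niso`). -/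
def NonIsolated (σ : A → List A) (c : A) : Prop :=
  IsGrowing σ c ∧ ¬ LeftIsolated σ c ∧ ¬ RightIsolated σ c

/-- A periodic letter: bounded, and occurring in some `σⁿ(a)`, `n ≥ 1`. -/
def IsPeriodicLetter (σ : A → List A) (a : A) : Prop :=
  IsBounded σ a ∧ ∃ n, 1 ≤ n ∧ [a] <:+: iterW σ n [a]

/-- `(a,u,b)` is a 1-block of the word `w`. -/
def Is1Block (σ : A → List A) (w : List A) (t : A × List A × A) : Prop :=
  IsGrowing σ t.1 ∧ IsGrowing σ t.2.2 ∧ (∀ x ∈ t.2.1, IsBounded σ x) ∧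
    (t.1 :: (t.2.1 ++ [t.2.2])) <:+: w

/-- The descendant map on 1-blocks. -/
noncomputable def Desc [Inhabited A] (σ : A → List A) : A × List A × A → A × List A × A :=
  fun t => (RCw σ (σ t.1), RBw σ (σ t.1) ++ applyW σ t.2.1 ++ LBw σ (σ t.2.2), LCw σ (σ t.2.2))

/-- The bi-infinite word `ωu.wvω`. -/
noncomputable def biWord [Inhabited A] (u w v : List A) : ℤ → A := fun i =>
  if i < 0 then u.getD ((i % (u.length : ℤ)).toNat) default
  else if i < (w.length : ℤ) then w.getD i.toNat default
  else v.getD (((i - (w.length : ℤ)) % (v.length : ℤ)).toNat) default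

lemma applyW_append (σ : A → List A) (u v : List A) :
    applyW σ (u ++ v) = applyW σ u ++ applyW σ v := by
  simp [applyW]

lemma iterW_append (σ : A → List A) (n : ℕ) (u v : List A) :
    iterW σ n (u ++ v) = iterW σ n u ++ iterW σ n v := by
  induction n generalizing u v with
  | zero => rfl
  | succ n ih =>
      simp only [iterW, Function.iterate_succ_apply, applyW_append]
      exact ih _ _

lemma iterW_add (σ : A → List A) (m n : ℕ) (u : List A) :
    iterW σ (m + n) u = iterW σ m (iterW σ n u) := by
  simp [iterW, Function.iterate_add_apply]

lemma iterW_succ' (σ : A → List A) (n : ℕ) (u : List A) :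
    iterW σ (n + 1) u = applyW σ (iterW σ n u) := by
  simp [iterW, Function.iterate_succ_apply']

lemma iterW_zero (σ : A → List A) (u : List A) : iterW σ 0 u = u := rfl


lemma length_le_flatMap (g : A → List A) (hg : ∀ c, g c ≠ []) (u : List A) :
    u.length ≤ (u.flatMap g).length := by
  induction u with
  | nil => simp
  | cons a t ih =>
      have h1 : 1 ≤ (g a).length := List.length_pos_iff.mpr (hg a)
      simp only [List.flatMap_cons, List.length_append, List.length_cons]
      omega

lemma length_le_applyW (σ : A → List A) (hσ : NonErasing σ) (u : List A) :
    u.length ≤ (applyW σ u).length := length_le_flatMap σ hσ u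

lemma length_iterW_le (σ : A → List A) (hσ : NonErasing σ) (u : List A) {m n : ℕ}
    (h : m ≤ n) : (iterW σ m u).length ≤ (iterW σ n u).length := by
  obtain ⟨d, rfl⟩ := Nat.exists_eq_add_of_le h
  rw [Nat.add_comm, iterW_add]
  induction d with
  | zero => exact le_rfl
  | succ d ih =>
      refine le_trans (ih (Nat.le_add_right _ _)) ?_
      rw [iterW_succ']
      exact length_le_applyW σ hσ _

lemma iterW_flatMap (σ : A → List A) (n : ℕ) (u : List A) :
    iterW σ n u = u.flatMap (fun c => iterW σ n [c]) := by
  induction u with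
  | nil =>
      have : iterW σ n ([] : List A) = [] := by
        induction n with
        | zero => rfl
        | succ n ih => rw [iterW_succ', ih]; rfl
      simp [this]
  | cons a t ih =>
      have : (a :: t) = [a] ++ t := rfl
      rw [this, iterW_append, ih]
      simp

lemma infix_iterW (σ : A → List A) (n : ℕ) {u v : List A} (h : u <:+: v) :
    iterW σ n u <:+: iterW σ n v := by
  obtain ⟨s, t, rfl⟩ := h
  rw [iterW_append, iterW_append]
  exact ⟨iterW σ n s, iterW σ n t, rfl⟩

lemma mem_iterW_succ (σ : A → List A) {n : ℕ} {e b c : A}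
    (hb : b ∈ iterW σ n [e]) (hc : c ∈ σ b) : c ∈ iterW σ (n + 1) [e] := by
  rw [iterW_succ']
  exact List.mem_flatMap.mpr ⟨b, hb, hc⟩

lemma bounded_of_mem (σ : A → List A) {a c : A} {m : ℕ} (ha : IsBounded σ a)
    (hc : c ∈ iterW σ m [a]) : IsBounded σ c := by
  obtain ⟨K, hK⟩ := ha
  refine ⟨K, fun n => ?_⟩
  obtain ⟨s, t, hst⟩ := List.append_of_mem hc
  have hinf : [c] <:+: iterW σ m [a] := ⟨s, t, by rw [hst]; simp⟩
  have := (infix_iterW σ n hinf).length_le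
  calc (iterW σ n [c]).length ≤ (iterW σ n (iterW σ m [a])).length := this
    _ = (iterW σ (n + m) [a]).length := by rw [iterW_add]
    _ ≤ K := hK _


/-- A bounded letter occurring in its own iterated image is actually fixed. -/
lemma fixed_of_bounded_mem (σ : A → List A) (hσ : NonErasing σ) {e : A} {p : ℕ}
    (hb : IsBounded σ e) (he : e ∈ iterW σ p [e]) : iterW σ p [e] = [e] := by
  obtain ⟨s, t, hst⟩ := List.append_of_mem he
  obtain ⟨K, hK⟩ := hb
  by_cases hnil : s = [] ∧ t = []
  · rw [hst, hnil.1, hnil.2]; rfl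
  · exfalso
    have hpos : 1 ≤ s.length + t.length := by
      rcases s with _ | ⟨x, l⟩
      · rcases t with _ | ⟨y, l⟩
        · exact absurd ⟨rfl, rfl⟩ hnil
        · simp only [List.length_nil, List.length_cons]; omega
      · simp only [List.length_cons]; omega
    have key : ∀ k : ℕ, k * (s.length + t.length) + 1 ≤ (iterW σ (k * p) [e]).length := by
      intro k
      induction k with
      | zero => simp [iterW_zero]
      | succ k ih =>
          have h1 : iterW σ ((k + 1) * p) [e]
              = iterW σ (k * p) s ++ iterW σ (k * p) [e] ++ iterW σ (k * p) t := by
            have : (k + 1) * p = k * p + p := by ring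
            rw [this, iterW_add, hst]
            have : s ++ e :: t = s ++ [e] ++ t := by simp
            rw [this, iterW_append, iterW_append]
          have h2 := length_iterW_le σ hσ s (Nat.zero_le (k * p))
          have h3 := length_iterW_le σ hσ t (Nat.zero_le (k * p))
          rw [iterW_zero] at h2 h3
          rw [h1]
          simp only [List.length_append]
          have := ih
          nlinarith
    have := key (K + 1)
    have := hK ((K + 1) * p)
    nlinarith

/-- If `flatMap g` fixes a word with `g` nonempty-valued, each letter is fixed by `g`. -/
lemma flatMap_fixed (g : A → List A) (hg : ∀ c, g c ≠ []) :
    ∀ u : List A, u.flatMap g = u → ∀ c ∈ u, g c = [c] := by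
  intro u
  induction u with
  | nil => intro _ c hc; simp at hc
  | cons a t ih =>
      intro h c hc
      rw [List.flatMap_cons] at h
      obtain ⟨x, r, hxr⟩ := List.exists_cons_of_ne_nil (hg a)
      rw [hxr] at h
      simp only [List.cons_append, List.cons.injEq] at h
      obtain ⟨rfl, h2⟩ := h
      have hlen : t.length ≤ (t.flatMap g).length := length_le_flatMap g hg t
      have hlen2 : r.length + (t.flatMap g).length = t.length := by
        have := congrArg List.length h2
        simpa using this
      have hr : r = [] := by
        have : r.length = 0 := by omega
        exact List.length_eq_zero_iff.mp this
      rw [hr] at h2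
      simp only [List.nil_append] at h2
      rcases List.mem_cons.mp hc with rfl | hc
      · rw [hxr, hr]
      · exact ih h2 c hc

/-- Letters of a word fixed by `iterW σ p` are themselves fixed. -/
lemma letter_fixed_of_word_fixed (σ : A → List A) (hσ : NonErasing σ) {p : ℕ} {u : List A}
    (hu : iterW σ p u = u) {c : A} (hc : c ∈ u) : iterW σ p [c] = [c] := by
  have hg : ∀ c : A, iterW σ p [c] ≠ [] := by
    intro c h
    have := length_iterW_le σ hσ [c] (Nat.zero_le p)
    rw [iterW_zero, h] at this
    simp at this
  have := iterW_flatMap σ p u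
  rw [hu] at this
  exact flatMap_fixed _ hg u this.symm c hc

/-- Chain of ancestors. -/
lemma exists_chain (σ : A → List A) (a : A) :
    ∀ m : ℕ, ∀ c ∈ iterW σ m [a], ∃ f : ℕ → A, f 0 = a ∧ f m = c ∧
      ∀ i < m, f (i + 1) ∈ σ (f i) := by
  intro m
  induction m with
  | zero =>
      intro c hc
      simp [iterW_zero] at hc
      exact ⟨fun _ => a, rfl, by rw [hc], fun i hi => absurd hi (Nat.not_lt_zero i)⟩
  | succ m ih =>
      intro c hc
      rw [iterW_succ'] at hc
      obtain ⟨b, hb, hcb⟩ := List.mem_flatMap.mp hc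
      obtain ⟨f, hf0, hfm, hstep⟩ := ih b hb
      refine ⟨fun i => if i ≤ m then f i else c, by simp [hf0], by simp, ?_⟩
      intro i hi
      rcases Nat.lt_or_ge i m with h | h
      · have : i + 1 ≤ m := h
        simp only [this, if_pos, Nat.le_of_lt h, if_pos]
        exact hstep i h
      · have hieq : i = m := by omega
        subst hieq
        simp only [Nat.not_succ_le_self, if_neg, le_rfl, if_pos]
        rw [hfm]
        exact hcb

lemma chain_mem (σ : A → List A) {m : ℕ} {f : ℕ → A}
    (hstep : ∀ i < m, f (i + 1) ∈ σ (f i)) :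
    ∀ i j : ℕ, i ≤ j → j ≤ m → f j ∈ iterW σ (j - i) [f i] := by
  intro i j hij hjm
  obtain ⟨d, rfl⟩ := Nat.exists_eq_add_of_le hij
  have : i + d - i = d := by omega
  rw [this]
  clear this hij
  induction d with
  | zero => simp [iterW_zero]
  | succ d ihd =>
      have h1 : f (i + d) ∈ iterW σ d [f i] := ihd (by omega)
      have h2 : f (i + d + 1) ∈ σ (f (i + d)) := hstep (i + d) (by omega)
      have := mem_iterW_succ σ h1 h2
      rw [show i + (d + 1) = i + d + 1 from rfl]
      exact this


lemma iterW_mul_fixed (σ : A → List A) {p : ℕ} {b : A} (h : iterW σ p [b] = [b]) :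
    ∀ k : ℕ, iterW σ (k * p) [b] = [b] := by
  intro k
  induction k with
  | zero => simp [iterW_zero]
  | succ k ih =>
      have : (k + 1) * p = k * p + p := by ring
      rw [this, iterW_add, h, ih]

lemma periodic_of_fixed (σ : A → List A) (hσ : NonErasing σ) {p : ℕ} (hp : 1 ≤ p) {b : A}
    (h : iterW σ p [b] = [b]) : IsPeriodicLetter σ b := by
  refine ⟨⟨1, fun n => ?_⟩, p, hp, by rw [h]⟩
  have h1 : n ≤ n * p := Nat.le_mul_of_pos_right n (by omega)
  have := length_iterW_le σ hσ [b] h1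
  rw [iterW_mul_fixed σ h n] at this
  simpa using this

lemma chain_conclusion (σ : A → List A) (hσ : NonErasing σ) {a b : A} {N : ℕ}
    {f : ℕ → A} (ha : IsBounded σ a) (hf0 : f 0 = a) (hfN : f N = b)
    (hstep : ∀ i < N, f (i + 1) ∈ σ (f i))
    {i j : ℕ} (hij : i < j) (hjN : j ≤ N) (hee : f i = f j) :
    IsPeriodicLetter σ b := by
  set e := f i with hedef
  have hea : e ∈ iterW σ i [a] := by
    have := chain_mem σ hstep 0 i (Nat.zero_le i) (le_trans (le_of_lt hij) hjN)
    simpa [hf0] using this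
  have heb : IsBounded σ e := bounded_of_mem σ ha hea
  have hemem : e ∈ iterW σ (j - i) [e] := by
    have := chain_mem σ hstep i j (le_of_lt hij) hjN
    rwa [← hee] at this
  have hfix : iterW σ (j - i) [e] = [e] := fixed_of_bounded_mem σ hσ heb hemem
  have hbw : b ∈ iterW σ (N - j) [e] := by
    have := chain_mem σ hstep j N hjN le_rfl
    rw [hfN] at this; rwa [hee]
  have hw : iterW σ (j - i) (iterW σ (N - j) [e]) = iterW σ (N - j) [e] := by
    rw [← iterW_add, Nat.add_comm, iterW_add, hfix]
  have hbfix : iterW σ (j - i) [b] = [b] :=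
    letter_fixed_of_word_fixed σ hσ hw hbw
  exact periodic_of_fixed σ hσ (by omega) hbfix

lemma length_le_sum_map (g : A → ℕ) :
    ∀ l : List A, (∀ b ∈ l, 1 ≤ g b) → l.length ≤ (l.map g).sum := by
  intro l
  induction l with
  | nil => simp
  | cons a t ih =>
      intro h
      have h1 := h a List.mem_cons_self
      have h2 := ih (fun b hb => h b (List.mem_cons_of_mem a hb))
      simp only [List.length_cons, List.map_cons, List.sum_cons]
      omega

lemma bounded_of_all_bounded (σ : A → List A) (hσ : NonErasing σ) {a : A} {m : ℕ}
    (h : ∀ b ∈ iterW σ m [a], IsBounded σ b) : IsBounded σ a := by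
  classical
  set w := iterW σ m [a] with hw
  set g : A → ℕ := fun b => if hb : IsBounded σ b then hb.choose else 0 with hg
  have hgspec : ∀ b ∈ w, ∀ n, (iterW σ n [b]).length ≤ g b := by
    intro b hb n
    have hbb := h b hb
    simp only [hg, dif_pos hbb]
    exact hbb.choose_spec n
  have hg1 : ∀ b ∈ w, 1 ≤ g b := by
    intro b hb
    have := hgspec b hb 0
    simpa [iterW_zero] using this
  refine ⟨(w.map g).sum, fun n => ?_⟩
  rcases le_or_gt n m with hnm | hmn
  · calc (iterW σ n [a]).length ≤ (iterW σ m [a]).length := length_iterW_le σ hσ _ hnm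
      _ = w.length := by rw [hw]
      _ ≤ (w.map g).sum := length_le_sum_map g w hg1
  · obtain ⟨d, rfl⟩ := Nat.exists_eq_add_of_le (le_of_lt hmn)
    have h1 : iterW σ (m + d) [a] = iterW σ d w := by
      rw [hw, ← iterW_add, Nat.add_comm]
    rw [h1, iterW_flatMap, List.length_flatMap]
    refine List.sum_le_sum ?_
    intro b hb
    exact hgspec b hb d

/-- `a` is bounded iff every letter of `σ^{|A|}(a)` is periodic. -/
theorem stmt3 [Fintype A] (σ : A → List A) (hσ : NonErasing σ) (a : A) :
    IsBounded σ a ↔ ∀ b ∈ iterW σ (Fintype.card A) [a], IsPeriodicLetter σ b := by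
  constructor
  · intro ha b hb
    set N := Fintype.card A with hN
    obtain ⟨f, hf0, hfN, hstep⟩ := exists_chain σ a N b hb
    have hcard : Fintype.card A < Fintype.card (Fin (N + 1)) := by
      simp [hN]
    obtain ⟨i, j, hne, heq⟩ :=
      Fintype.exists_ne_map_eq_of_card_lt (fun i : Fin (N + 1) => f i) hcard
    rcases Nat.lt_or_ge (i : ℕ) (j : ℕ) with hij | hij
    · exact chain_conclusion σ hσ ha hf0 hfN hstep hij (by omega) heq
    · have hji : (j : ℕ) < (i : ℕ) := by
        rcases Nat.lt_or_ge (j : ℕ) (i : ℕ) with h | h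
        · exact h
        · exact absurd (Fin.ext (by omega)) hne
      exact chain_conclusion σ hσ ha hf0 hfN hstep hji (by omega) heq.symm
  · intro h
    exact bounded_of_all_bounded σ hσ (fun b hb => (h b hb).1)

end SubstPaper
end

section
/- If X ⊆ B^ℤ is a minimal component of X_σ (a minimal subshift contained in X_σ consisting of bounded letters only), then X is a single periodic orbit: there exists u ∈ B⁺ with X = X(ᵠuᵠ), the orbit closure of the periodic word ···uuu··· . -/
open List
open scoped Classical

namespace SubstPaper

variable {A : Type*}

/-- Shift by an arbitrary integer. -/
def shiftZ (k : ℤ) (x : ℤ → A) : ℤ → A := fun i => x (i + k)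

lemma continuous_shiftZ [TopologicalSpace A] (k : ℤ) :
    Continuous (shiftZ k : (ℤ → A) → (ℤ → A)) :=
  continuous_pi fun _ => continuous_apply _

lemma shiftZ_mem [TopologicalSpace A] {X : Set (ℤ → A)} (hX : shiftT '' X = X)
    (k : ℤ) {x : ℤ → A} (hx : x ∈ X) : shiftZ k x ∈ X := by
  induction k using Int.induction_on with
  | zero =>
    have : shiftZ 0 x = x := by funext i; simp [shiftZ]
    rwa [this]
  | succ n ih =>
    have : shiftZ ((n : ℤ) + 1) x = shiftT (shiftZ n x) := by
      funext i; simp only [shiftZ, shiftT]; ring_nf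
    rw [this, ← hX]
    exact ⟨_, ih, rfl⟩
  | pred n ih =>
    rw [← hX] at ih
    obtain ⟨y, hy, hTy⟩ := ih
    have hyx : y = shiftZ (-(n : ℤ) - 1) x := by
      funext i
      have h1 : shiftT y (i - 1) = shiftZ (-(n : ℤ)) x (i - 1) := by rw [hTy]
      simp only [shiftT, shiftZ] at h1 ⊢
      have h2 : i - 1 + 1 = i := by ring
      rw [h2] at h1
      rw [h1]; ring_nf
    rwa [hyx] at hy

lemma shiftZ_image_orbit_subset (x : ℤ → A) (c : ℤ) :
    shiftZ c '' {y | ∃ k : ℤ, ∀ i, y i = x (i + k)} ⊆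
      {y | ∃ k : ℤ, ∀ i, y i = x (i + k)} := by
  rintro z ⟨y, ⟨k, hk⟩, rfl⟩
  exact ⟨k + c, fun i => by simp only [shiftZ, hk]; ring_nf⟩

lemma orbitClosure_isSubshift [TopologicalSpace A] (x : ℤ → A) :
    IsSubshift (orbitClosure x) := by
  set O : Set (ℤ → A) := {y | ∃ k : ℤ, ∀ i, y i = x (i + k)} with hO
  have hTshift : (shiftT : (ℤ → A) → (ℤ → A)) = shiftZ 1 := by
    funext y i; rfl
  refine ⟨⟨x, subset_closure ⟨0, fun i => by simp⟩⟩, isClosed_closure, ?_⟩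
  apply Set.Subset.antisymm
  · rw [hTshift]
    calc shiftZ 1 '' closure O ⊆ closure (shiftZ 1 '' O) :=
          image_closure_subset_closure_image (continuous_shiftZ 1)
      _ ⊆ closure O := closure_mono (shiftZ_image_orbit_subset x 1)
  · intro z hz
    refine ⟨shiftZ (-1) z, ?_, ?_⟩
    · have : shiftZ (-1) z ∈ closure (shiftZ (-1) '' O) :=
        image_closure_subset_closure_image (continuous_shiftZ (-1)) ⟨z, hz, rfl⟩
      exact closure_mono (shiftZ_image_orbit_subset x (-1)) this
    · funext i
      simp only [shiftT, shiftZ]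
      congr 1; ring

/-- Every minimal component of `X_σ` over bounded letters is a single periodic orbit
`X(ωuω)`, assuming the Béal–Perrin–Restivo structure theorem for `X_σ ∩ B^ℤ`. -/
theorem stmt10 [Fintype A] [Inhabited A] [TopologicalSpace A] [DiscreteTopology A]
    (σ : A → List A) (hσ : NonErasing σ) (hC : ∃ c, IsGrowing σ c)
    (hBPR : ∀ x ∈ Xsub σ, (∀ i, IsBounded σ (x i)) →
      ∃ u v w : List A, u ≠ [] ∧ v ≠ [] ∧ w ≠ [] ∧
        (∀ b ∈ u ++ v ++ w, IsBounded σ b) ∧ ∃ k : ℤ, ∀ i, x i = biWord u w v (i + k))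
    (X : Set (ℤ → A)) (hXσ : X ⊆ Xsub σ) (hXB : ∀ x ∈ X, ∀ i, IsBounded σ (x i))
    (hmin : IsMinimalSubshift X) :
    ∃ u : List A, u ≠ [] ∧ (∀ b ∈ u, IsBounded σ b) ∧ X = orbitClosure (perWord u) := by
  obtain ⟨⟨⟨x, hx⟩, hXclosed, hXshift⟩, hminimal⟩ := hmin
  obtain ⟨u, v, w, hu, hv, hw, hB, k, hbi⟩ := hBPR x (hXσ hx) (hXB x hx)
  have hlen : 0 < (u.length : ℤ) := by
    exact_mod_cast List.length_pos_iff.mpr hu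
  -- the periodic word ωuω lies in X
  have key : perWord u ∈ X := by
    have hseq : ∀ m : ℕ, shiftZ (-k - ((m : ℤ) + 1) * u.length) x ∈ X :=
      fun m => shiftZ_mem hXshift _ hx
    have htend : Filter.Tendsto (fun m : ℕ => shiftZ (-k - ((m : ℤ) + 1) * u.length) x)
        Filter.atTop (nhds (perWord u)) := by
      rw [tendsto_pi_nhds]
      intro i
      apply Filter.Tendsto.congr' _ tendsto_const_nhds
      filter_upwards [Filter.eventually_ge_atTop i.natAbs] with m hm
      have harg : i + (-k - ((m : ℤ) + 1) * u.length) + k = i - ((m : ℤ) + 1) * u.length := by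
        ring
      have hneg : i - ((m : ℤ) + 1) * u.length < 0 := by
        have h1 : i ≤ (i.natAbs : ℤ) := Int.le_natAbs
        have h2 : (m : ℤ) + 1 ≤ ((m : ℤ) + 1) * u.length := by
          nlinarith
        have h3 : (i.natAbs : ℤ) ≤ (m : ℤ) := by exact_mod_cast hm
        linarith
      have hmod : (i - ((m : ℤ) + 1) * u.length) % u.length = i % u.length := by
        have : i - ((m : ℤ) + 1) * u.length = i + (-((m : ℤ) + 1)) * u.length := by ring
        rw [this, Int.add_mul_emod_self_right]
      simp only [shiftZ, hbi, harg, biWord, perWord, if_pos hneg, hmod]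
    exact hXclosed.mem_of_tendsto htend (Filter.Eventually.of_forall hseq)
  -- the orbit closure of ωuω is contained in X
  have hsub : orbitClosure (perWord u) ⊆ X := by
    apply closure_minimal _ hXclosed
    rintro y ⟨k', hk'⟩
    have : y = shiftZ k' (perWord u) := by funext i; exact hk' i
    rw [this]
    exact shiftZ_mem hXshift k' key
  exact ⟨u, hu, fun b hb => hB b (by simp [hb]),
    (hminimal _ hsub (orbitClosure_isSubshift _)).symm⟩

end SubstPaper
end

section
/- For every x ∈ X_σ there exist y ∈ X_σ and k ∈ ℤ such that x = Tᵏ(σ(y)), where T is the shift and σ(y) denotes the bi-infinite word obtained by applying σ letterwise (with the origin at the image of position 0). -/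
open List
open scoped Classical

namespace SubstPaper

variable {A : Type*}

def Spre (σ : A → List A) (w : List A) (t : ℕ) : ℕ := ((w.take t).flatMap σ).length

lemma Spre_zero (σ : A → List A) (w : List A) : Spre σ w 0 = 0 := rfl

lemma Spre_length (σ : A → List A) (w : List A) : Spre σ w w.length = (applyW σ w).length := by
  simp [Spre, applyW]

lemma Spre_succ (σ : A → List A) (w : List A) {t : ℕ} (h : t < w.length) (d : A) :
    Spre σ w (t+1) = Spre σ w t + (σ (w.getD t d)).length := by
  have hh : w.take (t+1) = w.take t ++ [w[t]] := by
    rw [← List.take_concat_get h]; simp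
  rw [Spre, hh, List.flatMap_append, List.getD_eq_getElem w d h]
  simp [Spre]

lemma Spre_stable (σ : A → List A) (w : List A) {t : ℕ} (h : w.length ≤ t) :
    Spre σ w t = Spre σ w w.length := by
  rw [Spre, Spre, List.take_of_length_le h, List.take_length]

lemma Spre_le_succ (σ : A → List A) (w : List A) (t : ℕ) :
    Spre σ w t ≤ Spre σ w (t+1) := by
  rcases lt_or_ge t w.length with h | h
  · rw [Spre_succ σ w h w[t]]; omega
  · rw [Spre_stable σ w (le_trans h (Nat.le_succ _)), ← Spre_stable σ w h]

lemma Spre_mono (σ : A → List A) (w : List A) {t t' : ℕ} (h : t ≤ t') :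
    Spre σ w t ≤ Spre σ w t' := by
  induction t' with
  | zero =>
    have ht0 : t = 0 := by omega
    simp [ht0]
  | succ s ih =>
    rcases Nat.lt_or_ge t (s+1) with h' | h'
    · exact le_trans (ih (by omega)) (Spre_le_succ σ w s)
    · have : t = s + 1 := by omega
      exact this ▸ le_refl _

lemma Spre_add_le (σ : A → List A) (w : List A) {M : ℕ} (hM : ∀ a, (σ a).length ≤ M)
    (t s : ℕ) : Spre σ w (t + s) ≤ Spre σ w t + s * M := by
  induction s with
  | zero => simp
  | succ s ih =>
    rcases lt_or_ge (t + s) w.length with h | h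
    · rw [show t + (s+1) = (t+s)+1 from rfl, Spre_succ σ w h w[t+s]]
      have := hM (w.getD (t+s) w[t+s])
      nlinarith
    · rw [show t + (s+1) = (t+s)+1 from rfl, Spre_stable σ w (le_trans h (Nat.le_succ _)),
        ← Spre_stable σ w h]
      nlinarith

lemma le_Spre (σ : A → List A) (hσ : NonErasing σ) (w : List A) {t : ℕ} (h : t ≤ w.length) :
    t ≤ Spre σ w t := by
  induction t with
  | zero => simp
  | succ t ih =>
    have ht : t < w.length := by omega
    rw [Spre_succ σ w ht w[t]]
    have h1 : 1 ≤ (σ (w.getD t w[t])).length := List.length_pos_iff.mpr (hσ _)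
    have := ih (by omega)
    omega

lemma applyW_getD (σ : A → List A) (w : List A) (d : A) {t j : ℕ} (ht : t < w.length)
    (hj : j < (σ (w.getD t d)).length) :
    (applyW σ w).getD (Spre σ w t + j) d = (σ (w.getD t d)).getD j d := by
  have hsplit : w = w.take t ++ w[t] :: w.drop (t+1) := by
    conv_lhs => rw [← List.take_append_drop t w]
    congr 1
    exact (List.drop_eq_getElem_cons ht)
  rw [List.getD_eq_getElem w d ht] at hj ⊢
  have happ : (w.take t ++ w[t] :: w.drop (t+1)).flatMap σ = (w.take t).flatMap σ ++ (σ w[t] ++ (w.drop (t+1)).flatMap σ) := by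
    rw [List.flatMap_append, List.flatMap_cons]
  rw [← hsplit] at happ
  simp only [applyW]
  rw [happ]
  have h1 : ((w.take t).flatMap σ).length = Spre σ w t := rfl
  have hlen : Spre σ w t + j < ((w.take t).flatMap σ ++ (σ w[t] ++ (w.drop (t+1)).flatMap σ)).length := by
    simp [h1]; omega
  rw [List.getD_eq_getElem _ d hlen, List.getElem_append_right (by omega)]
  have h2 : Spre σ w t + j - ((w.take t).flatMap σ).length = j := by simp [h1]
  simp_rw [h2]
  rw [List.getElem_append_left hj, List.getD_eq_getElem _ d hj]

lemma exists_tile (σ : A → List A) (w : List A) {q : ℕ} (hq : q < Spre σ w w.length) :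
    ∃ t, t < w.length ∧ Spre σ w t ≤ q ∧ q < Spre σ w (t+1) := by
  set P : ℕ → Prop := fun t => Spre σ w t ≤ q with hP
  have h0 : P 0 := by simp [hP, Spre_zero]
  have hspec : P (Nat.findGreatest P w.length) := Nat.findGreatest_spec (Nat.zero_le _) h0
  set t := Nat.findGreatest P w.length with ht
  have htle : t ≤ w.length := Nat.findGreatest_le _
  have hPs : Spre σ w t ≤ q := hspec
  have htlt : t < w.length := by
    rcases htle.lt_or_eq with h | h
    · exact h
    · exfalso; rw [h] at hPs; omega
  refine ⟨t, htlt, hPs, ?_⟩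
  have := Nat.findGreatest_is_greatest (Nat.lt_succ_self t) (by omega : t + 1 ≤ w.length)
  have h2 : ¬ Spre σ w (t+1) ≤ q := by simpa [hP, Nat.succ_eq_add_one] using this
  omega


noncomputable def cumZ (σ : A → List A) (y : ℤ → A) : ℤ → ℤ := fun i =>
  if 0 ≤ i then (∑ j ∈ Finset.range i.toNat, ((σ (y j)).length : ℤ))
  else -(∑ j ∈ Finset.range (-i).toNat, ((σ (y (-1 - j))).length : ℤ))

lemma cumZ_zero (σ : A → List A) (y : ℤ → A) : cumZ σ y 0 = 0 := by simp [cumZ]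

lemma cumZ_succ (σ : A → List A) (y : ℤ → A) (i : ℤ) :
    cumZ σ y (i+1) = cumZ σ y i + ((σ (y i)).length : ℤ) := by
  rcases le_or_gt 0 i with h | h
  · have h1 : (0:ℤ) ≤ i + 1 := by omega
    have h2 : (i+1).toNat = i.toNat + 1 := by omega
    simp only [cumZ, if_pos h, if_pos h1, h2, Finset.sum_range_succ]
    rw [Int.toNat_of_nonneg h]
  · rcases eq_or_lt_of_le (by omega : i + 1 ≤ 0) with h1 | h1
    · have hi : i = -1 := by omega
      subst hi
      simp [cumZ]
    · have hne : ¬ (0:ℤ) ≤ i + 1 := by omega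
      have hne2 : ¬ (0:ℤ) ≤ i := by omega
      have h2 : (-i).toNat = (-(i+1)).toNat + 1 := by omega
      simp only [cumZ, if_neg hne, if_neg hne2, h2, Finset.sum_range_succ]
      have h3 : (-1 : ℤ) - (-(i+1)).toNat = i := by omega
      rw [h3]
      ring

lemma cumZ_congr (σ : A → List A) {y y' : ℤ → A} {m : ℕ}
    (h : ∀ j : ℤ, |j| ≤ (m:ℤ) → y j = y' j) {i : ℤ} (hi : |i| ≤ (m:ℤ)) :
    cumZ σ y i = cumZ σ y' i := by
  obtain ⟨hi1, hi2⟩ := abs_le.mp hi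
  unfold cumZ
  rcases le_or_gt 0 i with h0 | h0
  · rw [if_pos h0, if_pos h0]
    refine Finset.sum_congr rfl fun j hj => ?_
    rw [Finset.mem_range] at hj
    have hj' : |(j:ℤ)| ≤ (m:ℤ) := by
      rw [Int.abs_natCast]; exact_mod_cast Nat.le_of_lt_succ (by omega)
    rw [h j hj']
  · rw [if_neg (by omega), if_neg (by omega)]
    congr 1
    refine Finset.sum_congr rfl fun j hj => ?_
    rw [Finset.mem_range] at hj
    have hj' : |(-1 - (j:ℤ))| ≤ (m:ℤ) := by
      rw [abs_of_nonpos (by omega)]; omega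
    rw [h (-1 - (j:ℤ)) hj']

def Wm (m : ℕ) (y : ℤ → A) : List A := (List.range (2*m+1)).map (fun t : ℕ => y ((t : ℤ) - (m : ℤ)))

lemma Wm_length (m : ℕ) (y : ℤ → A) : (Wm m y).length = 2*m+1 := by rw [Wm, List.length_map, List.length_range]

lemma Wm_getElem (m : ℕ) (y : ℤ → A) {t : ℕ} (h : t < 2*m+1) :
    (Wm m y)[t]'(by rw [Wm_length]; omega) = y ((t:ℤ) - m) := by
  simp only [Wm, List.getElem_map, List.getElem_range]

lemma Wm_congr {m : ℕ} {y y' : ℤ → A} (h : ∀ j : ℤ, |j| ≤ (m:ℤ) → y j = y' j) :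
    Wm m y = Wm m y' := by
  unfold Wm
  refine List.map_congr_left fun t ht => ?_
  rw [List.mem_range] at ht
  exact h _ (abs_le.mpr ⟨by omega, by omega⟩)

lemma infix_Wm {m : ℕ} {y : ℤ → A} {u : List A} {i : ℤ}
    (h1 : -(m:ℤ) ≤ i) (h2 : i + u.length ≤ (m:ℤ) + 1)
    (h : ∀ j : ℕ, (hj : j < u.length) → u[j] = y (i + j)) : u <:+: Wm m y := by
  have hu : u = ((Wm m y).drop (i + m).toNat).take u.length := by
    refine List.ext_getElem ?_ fun j hj1 hj2 => ?_
    · rw [List.length_take, List.length_drop, Wm_length]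
      omega
    · rw [List.getElem_take, List.getElem_drop]
      have hlt : (i+m).toNat + j < 2*m+1 := by
        have := (List.length_take .. ▸ hj2 : j < min u.length (((Wm m y).drop (i + m).toNat).length))
        rw [List.length_drop, Wm_length] at this
        omega
      rw [Wm_getElem m y hlt, h j hj1]
      congr 1
      omega
  rw [hu]
  exact ((List.take_prefix _ _).isInfix).trans ((List.drop_suffix _ _).isInfix)

lemma Wm_infix_Wm {m m' : ℕ} (h : m' ≤ m) (y : ℤ → A) : Wm m' y <:+: Wm m y := by
  refine infix_Wm (i := -(m':ℤ)) (by omega) (by rw [Wm_length]; push_cast; omega) fun j hj => ?_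
  · rw [Wm_getElem m' y (by rw [Wm_length] at hj; omega)]
    congr 1
    omega

lemma occursIn_Wm (x : ℤ → A) (N : ℕ) : OccursIn x (Wm N x) := by
  refine ⟨-(N:ℤ), fun j => ?_⟩
  have hj : (j:ℕ) < 2*N+1 := by rw [← Wm_length N x]; exact j.2
  rw [List.get_eq_getElem, Wm_getElem N x hj]
  congr 1
  omega

/-- Certificate predicate for desubstitution at radius `m`. -/
def Good (σ : A → List A) (x : ℤ → A) (m : ℕ) (p : ℕ × (ℤ → A)) : Prop :=
  p.1 < (σ (p.2 0)).length ∧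
  (∀ i : ℤ, |i| ≤ (m:ℤ) → ∀ j : ℕ, j < (σ (p.2 i)).length →
     x (cumZ σ p.2 i + (j:ℤ) - (p.1:ℤ)) = (σ (p.2 i)).getD j (p.2 i)) ∧
  ∃ b n, Wm m p.2 <:+: iterW σ n [b]

lemma good_antitone (σ : A → List A) (x : ℤ → A) {m m' : ℕ} (h : m' ≤ m)
    {p : ℕ × (ℤ → A)} (hp : Good σ x m p) : Good σ x m' p := by
  obtain ⟨h1, h2, b, n, h3⟩ := hp
  exact ⟨h1, fun i hi j hj => h2 i (le_trans hi (by exact_mod_cast h)) j hj,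
    b, n, (Wm_infix_Wm h p.2).trans h3⟩

lemma good_congr (σ : A → List A) (x : ℤ → A) (m : ℕ) {p q : ℕ × (ℤ → A)}
    (h1 : p.1 = q.1) (h2 : ∀ i : ℤ, |i| ≤ (m:ℤ) → p.2 i = q.2 i)
    (hp : Good σ x m p) : Good σ x m q := by
  obtain ⟨g1, g2, b, n, g3⟩ := hp
  refine ⟨?_, ?_, b, n, ?_⟩
  · rw [← h1, ← h2 0 (by simp)]; exact g1
  · intro i hi j hj
    rw [← h2 i hi] at hj ⊢
    rw [← h1, ← cumZ_congr σ h2 hi]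
    exact g2 i hi j hj
  · rw [← Wm_congr h2]; exact g3

lemma exists_good (σ : A → List A) (hσ : NonErasing σ) (d₀ : A)
    {M : ℕ} (hM : ∀ a, (σ a).length ≤ M) (hM1 : 1 ≤ M)
    {x : ℤ → A} (hx : x ∈ Xsub σ) (m : ℕ) :
    ∃ p : ℕ × (ℤ → A), Good σ x m p := by
  classical
  set N : ℕ := (m+1)*M with hN
  have hN1 : 1 ≤ N := by rw [hN]; exact Nat.mul_pos (by omega) hM1
  set u : List A := Wm N x with hu
  have hul : u.length = 2*N+1 := Wm_length N x
  have hocc : OccursIn x u := hu ▸ occursIn_Wm x N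
  obtain ⟨a, n, hinf⟩ := hx u hocc
  have hn : 1 ≤ n := by
    rcases Nat.eq_zero_or_pos n with h0 | h; swap
    · exact h
    exfalso
    have hl := hinf.length_le
    rw [h0] at hl
    simp only [iterW, Function.iterate_zero, id_eq, List.length_cons, List.length_nil] at hl
    omega
  set w : List A := iterW σ (n-1) [a] with hw
  have hiter : iterW σ n [a] = applyW σ w := by
    rw [hw, iterW, iterW, ← Function.iterate_succ_apply' (applyW σ) (n-1) [a]]
    congr 1
    omega
  obtain ⟨s, t, hst⟩ := hinf
  set e : ℕ := s.length with he
  have happ : applyW σ w = s ++ u ++ t := hiter.symm.trans hst.symm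
  have hSlen : Spre σ w w.length = (applyW σ w).length := Spre_length σ w
  have hlen2 : (applyW σ w).length = e + u.length + t.length := by
    rw [happ]; simp [List.length_append]; omega
  set q₀ : ℕ := e + N with hq0
  have hq₀ : q₀ < Spre σ w w.length := by rw [hSlen, hlen2]; omega
  obtain ⟨i₀, hi₀w, hS1, hS2⟩ := exists_tile σ w hq₀
  set d : ℕ := q₀ - Spre σ w i₀ with hd
  have hstep : Spre σ w (i₀+1) = Spre σ w i₀ + (σ (w.getD i₀ d₀)).length := Spre_succ σ w hi₀w d₀
  have hdlt : d < (σ (w.getD i₀ d₀)).length := by omega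
  have hdM : d < M := lt_of_lt_of_le hdlt (hM _)
  set K : ℕ := m*M with hK
  have hNK : N = K + M := by rw [hN, hK]; ring
  have hup : Spre σ w (i₀+1) ≤ (i₀+1) * M := by
    have h := Spre_add_le σ w hM 0 (i₀+1)
    simpa [Spre_zero] using h
  have hi₀m : m + 1 ≤ i₀ := by
    by_contra hc
    have h1 : i₀ + 1 ≤ m + 1 := by omega
    have h2 : (i₀+1)*M ≤ (m+1)*M := Nat.mul_le_mul_right M h1
    have h3 : q₀ < (m+1)*M := lt_of_lt_of_le (lt_of_lt_of_le hS2 hup) h2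
    have h4 : (m+1)*M ≤ q₀ := by rw [← hN]; omega
    exact absurd (lt_of_le_of_lt h4 h3) (lt_irrefl _)
  have hwlen : i₀ + m < w.length := by
    by_contra hc
    push_neg at hc
    have h1 : Spre σ w w.length ≤ Spre σ w (i₀ + m) := Spre_mono σ w hc
    have h2 : Spre σ w (i₀ + m) ≤ Spre σ w i₀ + K := by
      have := Spre_add_le σ w hM i₀ m
      rw [← hK] at this
      exact this
    have h4 : e + u.length ≤ Spre σ w w.length := by rw [hSlen, hlen2]; omega
    omega
  set y : ℤ → A := fun i => w.getD ((i₀:ℤ) + i).toNat d₀ with hy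
  have hcum : ∀ i : ℤ, -(m:ℤ) ≤ i → i ≤ (m:ℤ) →
      (cumZ σ y i) = (Spre σ w ((i₀:ℤ)+i).toNat : ℤ) - (Spre σ w i₀ : ℤ) := by
    have hpos : ∀ t : ℕ, t ≤ m → cumZ σ y (t:ℤ) = (Spre σ w (i₀+t) : ℤ) - Spre σ w i₀ := by
      intro t
      induction t with
      | zero => intro _; simp [cumZ_zero]
      | succ t ih =>
        intro hle
        have h1 := cumZ_succ σ y (t:ℤ)
        have ht : i₀ + t < w.length := by omega
        have h2 := Spre_succ σ w ht d₀
        have h3 : y (t:ℤ) = w.getD (i₀+t) d₀ := by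
          have hh : ((i₀:ℤ)+(t:ℤ)).toNat = i₀ + t := by omega
          simp only [hy]
          rw [hh]
        have h4 := ih (by omega)
        rw [h3] at h1
        rw [show ((t+1:ℕ):ℤ) = (t:ℤ)+1 by push_cast; ring, h1, h4,
          show i₀ + (t+1) = (i₀ + t) + 1 from rfl, h2]
        push_cast
        ring
    have hneg : ∀ t : ℕ, t ≤ m → cumZ σ y (-(t:ℤ)) = (Spre σ w (i₀-t) : ℤ) - Spre σ w i₀ := by
      intro t
      induction t with
      | zero => intro _; simp [cumZ_zero]
      | succ t ih =>
        intro hle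
        have h1 := cumZ_succ σ y (-((t:ℤ)+1))
        have hidx : i₀ - (t+1) < w.length := by omega
        have h2 := Spre_succ σ w hidx d₀
        have h2' : i₀ - (t+1) + 1 = i₀ - t := by omega
        rw [h2'] at h2
        have h3 : y (-((t:ℤ)+1)) = w.getD (i₀-(t+1)) d₀ := by
          have hh : ((i₀:ℤ) + (-((t:ℤ)+1))).toNat = i₀ - (t+1) := by omega
          simp only [hy]
          rw [hh]
        have h4 := ih (by omega)
        have h5 : -((t:ℤ)+1) + 1 = -(t:ℤ) := by ring
        rw [h5, h3] at h1
        rw [show (-((t+1:ℕ):ℤ)) = -((t:ℤ)+1) by push_cast; ring]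
        omega
    intro i hi1 hi2
    rcases le_or_gt 0 i with h0 | h0
    · have h := hpos i.toNat (by omega)
      rw [Int.toNat_of_nonneg h0] at h
      have h' : ((i₀:ℤ)+i).toNat = i₀ + i.toNat := by omega
      rw [h']
      exact h
    · have h := hneg (-i).toNat (by omega)
      rw [show -(((-i).toNat:ℕ):ℤ) = i by omega] at h
      have h' : ((i₀:ℤ)+i).toNat = i₀ - (-i).toNat := by omega
      rw [h']
      exact h
  refine ⟨(d, y), ?_, ?_, ?_⟩
  · show d < (σ (y 0)).length
    have h0 : y 0 = w.getD i₀ d₀ := by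
      simp only [hy]
      norm_num
    rw [h0]
    exact hdlt
  · intro i hi j hj
    obtain ⟨hi1, hi2⟩ := abs_le.mp hi
    show x (cumZ σ y i + (j:ℤ) - (d:ℤ)) = (σ (y i)).getD j (y i)
    set ti : ℕ := ((i₀:ℤ)+i).toNat with hti
    have hti1 : (ti:ℤ) = (i₀:ℤ)+i := by omega
    have htiw : ti < w.length := by omega
    have hyi : y i = w.getD ti d₀ := rfl
    have hcumi := hcum i hi1 hi2
    have hj' : j < (σ (w.getD ti d₀)).length := by rw [← hyi]; exact hj
    have hlow : Spre σ w i₀ ≤ Spre σ w (i₀ - m) + K := by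
      have h := Spre_add_le σ w hM (i₀ - m) m
      rw [← hK] at h
      have h' : i₀ - m + m = i₀ := by omega
      rw [h'] at h
      exact h
    have hlow2 : Spre σ w (i₀ - m) ≤ Spre σ w ti := Spre_mono σ w (by omega)
    have hhigh : Spre σ w ti + j < Spre σ w (i₀ + m + 1) := by
      have h1 : Spre σ w (ti+1) ≤ Spre σ w (i₀+m+1) := Spre_mono σ w (by omega)
      have h2 := Spre_succ σ w htiw d₀
      omega
    have hhigh2 : Spre σ w (i₀+m+1) ≤ Spre σ w (i₀+1) + K := by
      have h := Spre_add_le σ w hM (i₀+1) m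
      rw [← hK] at h
      have h' : i₀ + 1 + m = i₀ + m + 1 := by omega
      rw [h'] at h
      exact h
    have hσi₀ : (σ (w.getD i₀ d₀)).length ≤ M := hM _
    set q : ℕ := Spre σ w ti + j with hq
    have hqe : e + 1 ≤ q := by omega
    have hqlt : q < e + (2*N+1) := by omega
    set r : ℕ := q - e with hr
    have hur : u.getD r d₀ = x ((r:ℤ) - N) := by
      have hrlt : r < 2*N+1 := by omega
      rw [hu, List.getD_eq_getElem (Wm N x) d₀ (by rw [Wm_length]; omega)]
      exact Wm_getElem N x hrlt
    have happD : (applyW σ w).getD (e + r) d₀ = u.getD r d₀ := by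
      rw [happ]
      have hrlen : r < u.length := by omega
      have h1 : e + r < ((s ++ u) ++ t).length := by
        simp only [List.length_append]
        omega
      rw [List.getD_eq_getElem _ d₀ h1]
      rw [List.getElem_append_left (by simp only [List.length_append]; omega :
        e + r < (s ++ u).length)]
      rw [List.getElem_append_right (by omega : s.length ≤ e + r)]
      rw [List.getD_eq_getElem u d₀ hrlen]
      congr 1
      omega
    have htile : (applyW σ w).getD (e + r) d₀ = (σ (w.getD ti d₀)).getD j d₀ := by
      have hh : e + r = Spre σ w ti + j := by omega
      rw [hh]
      exact applyW_getD σ w d₀ htiw hj'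
    have hpos : cumZ σ y i + (j:ℤ) - (d:ℤ) = (r:ℤ) - N := by
      rw [hcumi, ← hti]
      omega
    rw [hpos, ← hur, ← happD, htile, hyi]
    rw [List.getD_eq_getElem _ d₀ hj', List.getD_eq_getElem _ _ hj']
  · refine ⟨a, n-1, ?_⟩
    have hWm : Wm m y = (w.drop (i₀ - m)).take (2*m+1) := by
      refine List.ext_getElem ?_ fun j hj1 hj2 => ?_
      · rw [Wm_length, List.length_take, List.length_drop]
        omega
      · rw [List.getElem_take, List.getElem_drop]
        have hj' : j < 2*m+1 := by rw [Wm_length] at hj1; exact hj1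
        rw [Wm_getElem m y hj']
        show y ((j:ℤ) - m) = _
        have hidx : ((i₀:ℤ) + ((j:ℤ) - m)).toNat = i₀ - m + j := by omega
        simp only [hy]
        rw [hidx]
        rw [List.getD_eq_getElem w d₀ (by omega)]
    rw [hWm]
    exact ((List.take_prefix _ _).isInfix).trans ((List.drop_suffix _ _).isInfix)

/-- Desubstitution: every `x ∈ X_σ` is a shifted image `Tᵏ(σ(y))` of some `y ∈ X_σ`. -/
theorem stmt11 [Fintype A] (σ : A → List A) (hσ : NonErasing σ)
    (hC : ∃ c, IsGrowing σ c) (x : ℤ → A) (hx : x ∈ Xsub σ) :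
    ∃ y ∈ Xsub σ, ∃ k : ℤ, IsSubstImage σ y (fun i => x (i + k)) := by
  classical
  obtain ⟨c, -⟩ := hC
  haveI : Nonempty A := ⟨c⟩
  set M : ℕ := Finset.univ.sup (fun a : A => (σ a).length) with hMdef
  have hM : ∀ a, (σ a).length ≤ M := fun a => Finset.le_sup (f := fun a : A => (σ a).length) (Finset.mem_univ a)
  have hM1 : 1 ≤ M := le_trans (List.length_pos_iff.mpr (hσ c)) (hM c)
  letI tA : TopologicalSpace A := ⊥
  haveI : DiscreteTopology A := ⟨rfl⟩
  set C : ℕ → Set (ℕ × (ℤ → A)) := fun m => {p | p.1 < M ∧ Good σ x m p} with hC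
  have hsub : ∀ m, ∀ p ∈ C m, p ∈ Set.Iio M ×ˢ (Set.univ : Set (ℤ → A)) := by
    intro m p hp
    exact ⟨hp.1, Set.mem_univ _⟩
  have hne : ∀ m, (C m).Nonempty := by
    intro m
    obtain ⟨p, hp⟩ := exists_good σ hσ c hM hM1 hx m
    exact ⟨p, lt_of_lt_of_le hp.1 (hM _), hp⟩
  have hdec : ∀ m, C (m+1) ⊆ C m := by
    intro m p hp
    exact ⟨hp.1, good_antitone σ x (Nat.le_succ m) hp.2⟩
  have hclosed : ∀ m, IsClosed (C m) := by
    intro m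
    set φ : ℕ × (ℤ → A) → ℕ × (Fin (2*m+1) → A) :=
      fun p => (p.1, fun t : Fin (2*m+1) => p.2 ((t:ℤ) - m)) with hφ
    have hφc : Continuous φ := by
      refine Continuous.prodMk continuous_fst ?_
      exact continuous_pi fun t => (continuous_apply _).comp continuous_snd
    have hCeq : C m = φ ⁻¹' (φ '' C m) := by
      apply subset_antisymm (Set.subset_preimage_image _ _)
      rintro p ⟨q, hq, hpq⟩
      have h1 : q.1 = p.1 := by
        have := congrArg Prod.fst hpq
        exact this
      have h2 : ∀ i : ℤ, |i| ≤ (m:ℤ) → q.2 i = p.2 i := by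
        intro i hi
        obtain ⟨hi1, hi2⟩ := abs_le.mp hi
        have hlt : (i + m).toNat < 2*m+1 := by omega
        have := congrFun (congrArg Prod.snd hpq) ⟨(i+m).toNat, hlt⟩
        change q.2 (((i+m).toNat : ℤ) - (m:ℤ)) = p.2 (((i+m).toNat : ℤ) - (m:ℤ)) at this
        rw [show (((i+m).toNat : ℤ)) - (m:ℤ) = i by omega] at this
        exact this
      exact ⟨h1 ▸ hq.1, good_congr σ x m h1 h2 hq.2⟩
    rw [hCeq]
    exact IsClosed.preimage hφc (isClosed_discrete _)
  have hcomp : IsCompact (C 0) := by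
    have h1 : IsCompact (Set.Iio M ×ˢ (Set.univ : Set (ℤ → A))) :=
      (Set.finite_Iio M).isCompact.prod isCompact_univ
    exact IsCompact.of_isClosed_subset h1 (hclosed 0) (hsub 0)
  obtain ⟨p, hp⟩ := IsCompact.nonempty_iInter_of_sequence_nonempty_isCompact_isClosed
    C hdec hne hcomp hclosed
  have hgood : ∀ m, Good σ x m p := fun m => (Set.mem_iInter.mp hp m).2
  refine ⟨p.2, ?_, -(p.1:ℤ), ?_⟩
  · intro u hu
    obtain ⟨i, hocc⟩ := hu
    rcases List.eq_nil_or_concat u with hnil | -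
    · subst hnil
      exact ⟨c, 0, List.nil_infix⟩
    set m : ℕ := i.natAbs + u.length with hm
    have huW : u <:+: Wm m p.2 := by
      refine infix_Wm (i := i) (by omega) (by omega) fun j hj => ?_
      have := hocc ⟨j, hj⟩
      rw [List.get_eq_getElem] at this
      exact this.symm
    obtain ⟨-, -, b, n, hWmi⟩ := hgood m
    exact ⟨b, n, huW.trans hWmi⟩
  · refine ⟨cumZ σ p.2, cumZ_zero σ p.2, cumZ_succ σ p.2, ?_⟩
    intro i j
    have hg := (hgood i.natAbs).2.1 i (by rw [abs_le]; omega) j.1 j.2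
    show x (cumZ σ p.2 i + (j.1:ℤ) + -(p.1:ℤ)) = (σ (p.2 i)).get j
    have harg : cumZ σ p.2 i + (j.1:ℤ) + -(p.1:ℤ) = cumZ σ p.2 i + (j.1:ℤ) - (p.1:ℤ) := by ring
    rw [harg, hg, List.getD_eq_getElem _ _ j.2, List.get_eq_getElem]

end SubstPaper
end
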